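/- If three lines in P^2 over F_2 together contain all 7 rational points, then the three lines are distinct and pass through a common point. -/

import Mathlib

/-- A point of `P^2(F_2)` is a 1-dimensional subspace of `F_2^3`. -/
abbrev FanoPoint (p : Submodule (ZMod 2) (Fin 3 → ZMod 2)) : Prop :=
  Module.finrank (ZMod 2) p = 1

/-- A line of `P^2(F_2)` is a 2-dimensional subspace of `F_2^3`. -/
abbrev FanoLine (L : Submodule (ZMod 2) (Fin 3 → ZMod 2)) : Prop :=
  Module.finrank (ZMod 2) L = 2

/-!
Counting vectors of `F_2^3`: each line carries 4 of the 8 vectors, and two distinct lines share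
exactly 2 (one point and `0`). Inclusion–exclusion for three lines covering the space gives
`8 = 3 * 4 - 3 * 2 + |L₁ ∩ L₂ ∩ L₃|`, so the three lines share a nonzero vector. Distinctness is
the fact that no vector space is the union of two proper subspaces.
-/

open Module Set

theorem Set.ncard_union_union_add_ncard_inter {α : Type*} [Finite α] (s t u : Set α) :
    (s ∪ t ∪ u).ncard + (s ∩ t).ncard + (s ∩ u).ncard + (t ∩ u).ncard =
      s.ncard + t.ncard + u.ncard + (s ∩ t ∩ u).ncard := by
  have hst := ncard_union_add_ncard_inter s t
  have hstu := ncard_union_add_ncard_inter (s ∪ t) u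
  have hinter := ncard_union_add_ncard_inter (s ∩ u) (t ∩ u)
  rw [union_inter_distrib_right] at hstu
  rw [← inter_inter_distrib_right] at hinter
  omega

namespace Submodule

variable {R M : Type*} [Ring R] [AddCommGroup M] [Module R M]

theorem coe_union_ne_univ {p q : Submodule R M} (hp : p ≠ ⊤) (hq : q ≠ ⊤) :
    (p ∪ q : Set M) ≠ univ := by
  intro hpq
  obtain ⟨x, hxp⟩ := SetLike.exists_not_mem_of_ne_top p hp
  obtain ⟨y, hyq⟩ := SetLike.exists_not_mem_of_ne_top q hq
  have hxq : x ∈ q := (hpq ▸ mem_univ x : x ∈ (p ∪ q : Set M)).resolve_left hxp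
  have hyp : y ∈ p := (hpq ▸ mem_univ y : y ∈ (p ∪ q : Set M)).resolve_right hyq
  rcases (hpq ▸ mem_univ (x + y) : x + y ∈ (p ∪ q : Set M)) with h | h
  · exact hxp ((p.add_mem_iff_left hyp).mp h)
  · exact hyq ((q.add_mem_iff_right hxq).mp h)

variable {K V : Type*} [Field K] [AddCommGroup V] [Module K V]

theorem ncard_coe_eq_pow_finrank [Finite K] [FiniteDimensional K V] (p : Submodule K V) :
    (p : Set V).ncard = Nat.card K ^ finrank K p := by
  rw [← Nat.card_coe_set_eq, SetLike.coe_sort_coe, Module.natCard_eq_pow_finrank (K := K)]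

theorem finrank_inf_add_two_of_ne [FiniteDimensional K V] {p q : Submodule K V}
    (hp : finrank K p + 1 = finrank K V) (hq : finrank K q + 1 = finrank K V) (hpq : p ≠ q) :
    finrank K ↥(p ⊓ q) + 2 = finrank K V := by
  have hlt : p < p ⊔ q := by
    refine lt_of_le_of_ne le_sup_left fun h => hpq ?_
    exact (eq_of_le_of_finrank_eq (h ▸ le_sup_right) (by omega)).symm
  have hsup := finrank_lt_finrank_of_lt hlt
  have hle := (p ⊔ q).finrank_le
  have hsum := finrank_sup_add_finrank_inf_eq p q
  omega

end Submodule

theorem exists_ne_zero_mem_inf_inf_of_coe_union_eq_univ {V : Type*} [AddCommGroup V]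
    [Module (ZMod 2) V] [FiniteDimensional (ZMod 2) V] (hV : finrank (ZMod 2) V = 3)
    {L₁ L₂ L₃ : Submodule (ZMod 2) V} (h₁ : finrank (ZMod 2) L₁ = 2)
    (h₂ : finrank (ZMod 2) L₂ = 2) (h₃ : finrank (ZMod 2) L₃ = 2)
    (h₁₂ : L₁ ≠ L₂) (h₁₃ : L₁ ≠ L₃) (h₂₃ : L₂ ≠ L₃)
    (hcover : (L₁ ∪ L₂ ∪ L₃ : Set V) = univ) :
    ∃ v ≠ 0, v ∈ L₁ ⊓ L₂ ⊓ L₃ := by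
  have : Finite V := Module.finite_of_finite (ZMod 2)
  have hcard (p : Submodule (ZMod 2) V) : (p : Set V).ncard = 2 ^ finrank (ZMod 2) p := by
    rw [p.ncard_coe_eq_pow_finrank, Nat.card_zmod]
  have hpair {p q : Submodule (ZMod 2) V} (hp : finrank (ZMod 2) p = 2)
      (hq : finrank (ZMod 2) q = 2) (hpq : p ≠ q) : ((p : Set V) ∩ q).ncard = 2 := by
    have := Submodule.finrank_inf_add_two_of_ne (by omega) (by omega) hpq
    rw [← Submodule.coe_inf, hcard]
    simp [show finrank (ZMod 2) ↥(p ⊓ q) = 1 by omega]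
  have hcount := Set.ncard_union_union_add_ncard_inter (L₁ : Set V) L₂ L₃
  rw [hcover, ← Submodule.top_coe (R := ZMod 2), hcard, hcard, hcard,
    hcard, finrank_top, hV, h₁, h₂, h₃, hpair h₁ h₂ h₁₂, hpair h₁ h₃ h₁₃, hpair h₂ h₃ h₂₃]
    at hcount
  obtain ⟨v, hv, hv0⟩ := exists_ne_of_one_lt_ncard (s := (L₁ : Set V) ∩ L₂ ∩ L₃) (by omega) 0
  exact ⟨v, hv0, hv⟩

/-- If three lines in `P^2(F_2)` together contain all 7 rational points, then the
three lines are distinct and pass through a common point. -/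
theorem three_lines_covering_are_concurrent
    (L₁ L₂ L₃ : Submodule (ZMod 2) (Fin 3 → ZMod 2))
    (h₁ : FanoLine L₁) (h₂ : FanoLine L₂) (h₃ : FanoLine L₃)
    (hcover : ∀ p : Submodule (ZMod 2) (Fin 3 → ZMod 2), FanoPoint p →
      p ≤ L₁ ∨ p ≤ L₂ ∨ p ≤ L₃) :
    (L₁ ≠ L₂ ∧ L₁ ≠ L₃ ∧ L₂ ≠ L₃) ∧
    ∃ p : Submodule (ZMod 2) (Fin 3 → ZMod 2),
      FanoPoint p ∧ p ≤ L₁ ∧ p ≤ L₂ ∧ p ≤ L₃ := by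
  have hV : finrank (ZMod 2) (Fin 3 → ZMod 2) = 3 := finrank_fin_fun _
  have hunion : (L₁ ∪ L₂ ∪ L₃ : Set (Fin 3 → ZMod 2)) = univ := by
    refine eq_univ_of_forall fun v => ?_
    rcases eq_or_ne v 0 with rfl | hv
    · exact Or.inl (Or.inl L₁.zero_mem)
    · simpa only [mem_union, SetLike.mem_coe, ← Submodule.span_singleton_le_iff_mem, or_assoc]
        using hcover _ (finrank_span_singleton hv)
  have hne_top {L : Submodule (ZMod 2) (Fin 3 → ZMod 2)} (hL : FanoLine L) : L ≠ ⊤ := by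
    rintro rfl
    rw [FanoLine, finrank_top, hV] at hL
    omega
  have hdistinct : L₁ ≠ L₂ ∧ L₁ ≠ L₃ ∧ L₂ ≠ L₃ := by
    refine ⟨?_, ?_, ?_⟩ <;> rintro rfl
    · exact Submodule.coe_union_ne_univ (hne_top h₁) (hne_top h₃) (by rwa [union_self] at hunion)
    · exact Submodule.coe_union_ne_univ (hne_top h₁) (hne_top h₂)
        (by rwa [union_right_comm, union_self] at hunion)
    · exact Submodule.coe_union_ne_univ (hne_top h₁) (hne_top h₂)
        (by rwa [union_assoc, union_self] at hunion)
  obtain ⟨v, hv0, ⟨hv₁, hv₂⟩, hv₃⟩ := exists_ne_zero_mem_inf_inf_of_coe_union_eq_univ hV h₁ h₂ h₃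
    hdistinct.1 hdistinct.2.1 hdistinct.2.2 hunion
  refine ⟨hdistinct, Submodule.span (ZMod 2) {v}, finrank_span_singleton hv0, ?_⟩
  simpa only [Submodule.span_singleton_le_iff_mem] using ⟨hv₁, hv₂, hv₃⟩
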